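/- There is no 2K_2-free-split graph; that is, no finite simple graph is simultaneously 2K_2-free and 2K_2-split. -/

import Mathlib

open SimpleGraph

/-- The contraction `G/uv` of the edge between `u` and `v`: the vertex `v` is deleted
and merged into `u`, whose new neighbourhood is `(N(u) ∪ N(v)) \\ {u, v}`. -/
def SimpleGraph.contractEdge {V : Type*} (G : SimpleGraph V) (u v : V) :
    SimpleGraph {x : V // x ≠ v} :=
  SimpleGraph.fromRel fun a b => G.Adj a.1 b.1 ∨ (a.1 = u ∧ G.Adj v b.1)

/-- `J` is `G`-free-split (for a single graph `G`): `J` is `G`-free (no induced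
subgraph of `J` is isomorphic to `G`) and some `J`-contraction is isomorphic to `G`. -/
def IsFreeSplitOf {A B : Type*} (J : SimpleGraph A) (G : SimpleGraph B) : Prop :=
  (¬ Nonempty (G ↪g J)) ∧ ∃ a b, J.Adj a b ∧ Nonempty (G ≃g J.contractEdge a b)

lemma contractEdge_adj {V : Type*} (G : SimpleGraph V) (a b : V) (c d : {x : V // x ≠ b}) :
    (G.contractEdge a b).Adj c d ↔
      c ≠ d ∧ (G.Adj c.1 d.1 ∨ (c.1 = a ∧ G.Adj b d.1) ∨ (d.1 = a ∧ G.Adj b c.1)) := by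
  rw [SimpleGraph.contractEdge, fromRel_adj]
  have := G.adj_comm c.1 d.1
  tauto

lemma contractEdge_not_adj {V : Type*} {G : SimpleGraph V} {a b : V} {c d : {x : V // x ≠ b}}
    (h : ¬ (G.contractEdge a b).Adj c d) (hcd : c ≠ d) :
    ¬ G.Adj c.1 d.1 ∧ (c.1 = a → ¬ G.Adj b d.1) ∧ (d.1 = a → ¬ G.Adj b c.1) := by
  rw [contractEdge_adj] at h
  tauto

lemma aux1 {V : Type*} (G : SimpleGraph V) (a b : V)
    (y1 y2 y3 y4 : {x : V // x ≠ b})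
    (d13 : y1 ≠ y3) (d14 : y1 ≠ y4) (d23 : y2 ≠ y3) (d24 : y2 ≠ y4)
    (h12 : (G.contractEdge a b).Adj y1 y2) (h34 : (G.contractEdge a b).Adj y3 y4)
    (h13 : ¬ (G.contractEdge a b).Adj y1 y3) (h14 : ¬ (G.contractEdge a b).Adj y1 y4)
    (h23 : ¬ (G.contractEdge a b).Adj y2 y3) (h24 : ¬ (G.contractEdge a b).Adj y2 y4)
    (ha2 : y2.1 ≠ a) (ha3 : y3.1 ≠ a) (ha4 : y4.1 ≠ a) :
    ∃ p1 p2 p3 p4 : V, G.Adj p1 p2 ∧ G.Adj p3 p4 ∧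
      ¬ G.Adj p1 p3 ∧ ¬ G.Adj p1 p4 ∧ ¬ G.Adj p2 p3 ∧ ¬ G.Adj p2 p4 ∧
      p1 ≠ p3 ∧ p1 ≠ p4 ∧ p2 ≠ p3 ∧ p2 ≠ p4 := by
  obtain ⟨n13, m13, _⟩ := contractEdge_not_adj h13 d13
  obtain ⟨n14, m14, _⟩ := contractEdge_not_adj h14 d14
  obtain ⟨n23, _, _⟩ := contractEdge_not_adj h23 d23
  obtain ⟨n24, _, _⟩ := contractEdge_not_adj h24 d24
  have v13 : y1.1 ≠ y3.1 := fun h => d13 (Subtype.ext h)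
  have v14 : y1.1 ≠ y4.1 := fun h => d14 (Subtype.ext h)
  have v23 : y2.1 ≠ y3.1 := fun h => d23 (Subtype.ext h)
  have v24 : y2.1 ≠ y4.1 := fun h => d24 (Subtype.ext h)
  have e34 : G.Adj y3.1 y4.1 := by
    rw [contractEdge_adj] at h34
    rcases h34 with ⟨_, h | ⟨h, _⟩ | ⟨h, _⟩⟩
    · exact h
    · exact absurd h ha3
    · exact absurd h ha4
  by_cases h1 : y1.1 = a
  · -- the merged vertex is y1
    rw [contractEdge_adj] at h12
    have e12 : G.Adj a y2.1 ∨ G.Adj b y2.1 := by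
      rcases h12 with ⟨_, h | ⟨_, h⟩ | ⟨h, _⟩⟩
      · exact Or.inl (h1 ▸ h)
      · exact Or.inr h
      · exact absurd h ha2
    rcases e12 with h | h
    · exact ⟨a, y2.1, y3.1, y4.1, h, e34, h1 ▸ n13, h1 ▸ n14, n23, n24,
        h1 ▸ v13, h1 ▸ v14, v23, v24⟩
    · exact ⟨b, y2.1, y3.1, y4.1, h, e34, m13 h1, m14 h1, n23, n24,
        Ne.symm y3.2, Ne.symm y4.2, v23, v24⟩
  · have e12 : G.Adj y1.1 y2.1 := by
      rw [contractEdge_adj] at h12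
      rcases h12 with ⟨_, h | ⟨h, _⟩ | ⟨h, _⟩⟩
      · exact h
      · exact absurd h h1
      · exact absurd h ha2
    exact ⟨y1.1, y2.1, y3.1, y4.1, e12, e34, n13, n14, n23, n24, v13, v14, v23, v24⟩

lemma embed2K2 {V : Type*} (G : SimpleGraph V) (p1 p2 p3 p4 : V)
    (h12 : G.Adj p1 p2) (h34 : G.Adj p3 p4)
    (h13 : ¬ G.Adj p1 p3) (h14 : ¬ G.Adj p1 p4)
    (h23 : ¬ G.Adj p2 p3) (h24 : ¬ G.Adj p2 p4)
    (n13 : p1 ≠ p3) (n14 : p1 ≠ p4) (n23 : p2 ≠ p3) (n24 : p2 ≠ p4) :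
    Nonempty ((pathGraph 2 ⊕g pathGraph 2) ↪g G) := by
  have n12 : p1 ≠ p2 := h12.ne
  have n34 : p3 ≠ p4 := h34.ne
  refine ⟨⟨⟨Sum.elim ![p1, p2] ![p3, p4], ?_⟩, ?_⟩⟩
  · rintro (i | i) (j | j) <;> fin_cases i <;> fin_cases j <;>
      simp_all [n12.symm, n13.symm, n14.symm, n23.symm, n24.symm, n34.symm]
  · show ∀ {a b}, G.Adj (Sum.elim ![p1, p2] ![p3, p4] a) (Sum.elim ![p1, p2] ![p3, p4] b) ↔ _
    rintro (i | i) (j | j) <;> fin_cases i <;> fin_cases j <;>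
      simp_all [pathGraph_two_eq_top, G.adj_comm p1 p2, G.adj_comm p3 p4,
        G.adj_comm p1 p3, G.adj_comm p1 p4, G.adj_comm p2 p3, G.adj_comm p2 p4]

/-- There is no `2K_2`-free-split graph: no finite simple graph is simultaneously
`2K_2`-free and `2K_2`-split. -/
theorem stmt16 {V : Type*} [Fintype V] (G : SimpleGraph V) :
    ¬ IsFreeSplitOf G (pathGraph 2 ⊕g pathGraph 2) := by
  rintro ⟨hfree, a, b, hab, ⟨e⟩⟩
  apply hfree
  set z1 := e (Sum.inl 0) with hz1
  set z2 := e (Sum.inl 1) with hz2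
  set z3 := e (Sum.inr 0) with hz3
  set z4 := e (Sum.inr 1) with hz4
  have inj := e.toEquiv.injective
  have d12 : z1 ≠ z2 := inj.ne (by simp)
  have d13 : z1 ≠ z3 := inj.ne (by simp)
  have d14 : z1 ≠ z4 := inj.ne (by simp)
  have d23 : z2 ≠ z3 := inj.ne (by simp)
  have d24 : z2 ≠ z4 := inj.ne (by simp)
  have d34 : z3 ≠ z4 := inj.ne (by simp)
  have h12 : (G.contractEdge a b).Adj z1 z2 :=
    e.map_adj_iff.mpr (by simp [pathGraph_two_eq_top])
  have h34 : (G.contractEdge a b).Adj z3 z4 :=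
    e.map_adj_iff.mpr (by simp [pathGraph_two_eq_top])
  have h13 : ¬ (G.contractEdge a b).Adj z1 z3 := fun h => by
    simpa [pathGraph_two_eq_top] using e.map_adj_iff.mp h
  have h14 : ¬ (G.contractEdge a b).Adj z1 z4 := fun h => by
    simpa [pathGraph_two_eq_top] using e.map_adj_iff.mp h
  have h23 : ¬ (G.contractEdge a b).Adj z2 z3 := fun h => by
    simpa [pathGraph_two_eq_top] using e.map_adj_iff.mp h
  have h24 : ¬ (G.contractEdge a b).Adj z2 z4 := fun h => by
    simpa [pathGraph_two_eq_top] using e.map_adj_iff.mp h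
  have key : ∃ p1 p2 p3 p4 : V, G.Adj p1 p2 ∧ G.Adj p3 p4 ∧
      ¬ G.Adj p1 p3 ∧ ¬ G.Adj p1 p4 ∧ ¬ G.Adj p2 p3 ∧ ¬ G.Adj p2 p4 ∧
      p1 ≠ p3 ∧ p1 ≠ p4 ∧ p2 ≠ p3 ∧ p2 ≠ p4 := by
    by_cases c3 : z3.1 = a
    · have ha1 : z1.1 ≠ a := fun h => d13 (Subtype.ext (h.trans c3.symm))
      have ha2 : z2.1 ≠ a := fun h => d23 (Subtype.ext (h.trans c3.symm))
      have ha4 : z4.1 ≠ a := fun h => d34 (Subtype.ext (c3.trans h.symm))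
      exact aux1 G a b z3 z4 z1 z2 d13.symm d23.symm d14.symm d24.symm
        h34 h12 (fun h => h13 h.symm) (fun h => h23 h.symm)
        (fun h => h14 h.symm) (fun h => h24 h.symm) ha4 ha1 ha2
    · by_cases c4 : z4.1 = a
      · have ha1 : z1.1 ≠ a := fun h => d14 (Subtype.ext (h.trans c4.symm))
        have ha2 : z2.1 ≠ a := fun h => d24 (Subtype.ext (h.trans c4.symm))
        exact aux1 G a b z4 z3 z1 z2 d14.symm d24.symm d13.symm d23.symm
          h34.symm h12 (fun h => h14 h.symm) (fun h => h24 h.symm)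
          (fun h => h13 h.symm) (fun h => h23 h.symm) c3 ha1 ha2
      · by_cases c2 : z2.1 = a
        · have ha1 : z1.1 ≠ a := fun h => d12 (Subtype.ext (h.trans c2.symm))
          exact aux1 G a b z2 z1 z3 z4 d23 d24 d13 d14
            h12.symm h34 h23 h24 h13 h14 ha1 c3 c4
        · exact aux1 G a b z1 z2 z3 z4 d13 d14 d23 d24
            h12 h34 h13 h14 h23 h24 c2 c3 c4
  obtain ⟨p1, p2, p3, p4, a1, a2, a3, a4, a5, a6, a7, a8, a9, a10⟩ := key
  exact embed2K2 G p1 p2 p3 p4 a1 a2 a3 a4 a5 a6 a7 a8 a9 a10
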